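/- arXiv:2007.04493 — 4 statements merged into one kernel-verified Lean document; each statement's English description precedes it below -/
import Mathlib

section
/- Let φ be a continuous function on the unit sphere S^{n-1} ⊂ ℝⁿ, and let u* : B̄₁ → ℝ be a strictly convex continuous function on the closed unit ball satisfying u*(ξ) = −φ(ξ) for all ξ ∈ ∂B₁. Let u : ℝⁿ → ℝ be the Legendre (Fenchel) transform of u*, i.e. u(x) = sup_{ξ ∈ B̄₁} (x·ξ − u*(ξ)). Then u(x) − |x| − φ(x/|x|) → 0 uniformly as |x| → ∞. -/
open Filter Real Set Metric Bornology

noncomputable section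

abbrev Esp (n : ℕ) := EuclideanSpace ℝ (Fin n)

/-- i-th partial derivative of u at x. -/
def Egrad (n : ℕ) (u : Esp n → ℝ) (x : Esp n) : Fin n → ℝ :=
  fun i => fderiv ℝ u x (EuclideanSpace.single i 1)

/-- |Du(x)|². -/
def EgradSq (n : ℕ) (u : Esp n → ℝ) (x : Esp n) : ℝ :=
  ∑ i, (Egrad n u x i) ^ 2

/-- Hessian matrix D²u(x). -/
def Ehess (n : ℕ) (u : Esp n → ℝ) (x : Esp n) : Matrix (Fin n) (Fin n) ℝ :=
  fun i j => fderiv ℝ (fun y => fderiv ℝ u y (EuclideanSpace.single j 1)) x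
    (EuclideanSpace.single i 1)

/-- Curvature matrix A = (1/w) γ D²u γ. -/
def curvMat (n : ℕ) (u : Esp n → ℝ) (x : Esp n) : Matrix (Fin n) (Fin n) ℝ :=
  let Du := Egrad n u x
  let w := Real.sqrt (1 - EgradSq n u x)
  let γ : Matrix (Fin n) (Fin n) ℝ :=
    fun i k => (if i = k then (1 : ℝ) else 0) + Du i * Du k / (w * (1 + w))
  w⁻¹ • (γ * Ehess n u x * γ)

open Classical in
/-- Eigenvalues of a symmetric real matrix (junk value if not symmetric). -/
def matEigs {m : ℕ} (A : Matrix (Fin m) (Fin m) ℝ) : Fin m → ℝ :=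
  if h : A.IsHermitian then h.eigenvalues else 0

/-- Principal curvatures κ[M_u](x). -/
def princCurv (n : ℕ) (u : Esp n → ℝ) (x : Esp n) : Fin n → ℝ :=
  matEigs (curvMat n u x)

/-- k-th elementary symmetric polynomial σ_k. -/
def esymm (n k : ℕ) (κ : Fin n → ℝ) : ℝ :=
  (Finset.powersetCard k (Finset.univ : Finset (Fin n))).sum fun s => s.prod κ

/-- Gårding cone Γ_k. -/
def inGammaK (n k : ℕ) (κ : Fin n → ℝ) : Prop :=
  ∀ m : ℕ, 1 ≤ m → m ≤ k → 0 < esymm n m κ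

/-- Position vector X = (x, u(x)) ∈ ℝ^{n+1}. -/
def posVec (n : ℕ) (u : Esp n → ℝ) (x : Esp n) : Fin (n + 1) → ℝ :=
  Fin.snoc (fun i => x i) (u x)

/-- Upward unit timelike normal ν = (Du, 1)/w ∈ ℝ^{n+1}. -/
def normalVec (n : ℕ) (u : Esp n → ℝ) (x : Esp n) : Fin (n + 1) → ℝ :=
  Fin.snoc (fun i => Egrad n u x i / Real.sqrt (1 - EgradSq n u x))
    (1 / Real.sqrt (1 - EgradSq n u x))

/-- The hyperboloid ℍⁿ ⊂ ℝ^{n,1}. -/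
def hyperboloid (n : ℕ) : Set (Fin (n + 1) → ℝ) :=
  {ν | (∑ i : Fin n, (ν i.castSucc) ^ 2) - (ν (Fin.last n)) ^ 2 = -1 ∧ 0 < ν (Fin.last n)}

/-!
Write `x = r θ` with `‖θ‖ = 1`. The competitor `ξ = θ` gives `u x ≥ r - u* θ = r + φ θ`.
Conversely, a competitor `ξ` within `δ` of `θ` gains at most the oscillation of `u*` on a
`δ`-ball, while one farther away has `⟪x, ξ⟫ ≤ r (1 - δ² / 2)` and so loses `r δ² / 2`, more than
the oscillation `2 sup |u*|` once `r` is large. Uniform continuity of `u*` on the compact ball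
makes the estimate uniform in `θ`.
-/

section LegendreAsymptotics

open scoped RealInnerProductSpace Topology

variable {E : Type*} [NormedAddCommGroup E] [InnerProductSpace ℝ E]

lemma inner_le_one_sub_sq_div_two {θ ξ : E} {δ : ℝ} (hθ : ‖θ‖ = 1) (hξ : ‖ξ‖ ≤ 1)
    (hδ : 0 ≤ δ) (hfar : δ ≤ ‖ξ - θ‖) : ⟪θ, ξ⟫ ≤ 1 - δ ^ 2 / 2 := by
  have hexpand : ‖ξ - θ‖ ^ 2 = ‖ξ‖ ^ 2 - 2 * ⟪θ, ξ⟫ + ‖θ‖ ^ 2 := by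
    rw [norm_sub_sq_real, real_inner_comm]
  nlinarith [pow_le_pow_left₀ hδ hfar 2, pow_le_pow_left₀ (norm_nonneg ξ) hξ 2]

lemma mul_inner_sub_le {f : E → ℝ} {θ ξ : E} {r δ ε M : ℝ}
    (hfδ : ∀ η ∈ closedBall (0 : E) 1, ∀ ζ ∈ closedBall (0 : E) 1,
      dist η ζ < δ → dist (f η) (f ζ) < ε)
    (hM : ∀ η ∈ closedBall (0 : E) 1, |f η| ≤ M)
    (hδ : 0 < δ) (hr : 4 * M ≤ r * δ ^ 2) (hθ : ‖θ‖ = 1) (hξ : ξ ∈ closedBall (0 : E) 1) :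
    r * ⟪θ, ξ⟫ - f ξ ≤ r - f θ + ε := by
  have hθK : θ ∈ closedBall (0 : E) 1 := by simp [hθ]
  have hξ1 : ‖ξ‖ ≤ 1 := by simpa using hξ
  have hr0 : 0 ≤ r := nonneg_of_mul_nonneg_left
    (by linarith [(abs_nonneg _).trans (hM θ hθK)]) (pow_pos hδ 2)
  rcases lt_or_ge (dist ξ θ) δ with hnear | hfar
  · have hosc : f θ - f ξ < ε := by
      have := hfδ ξ hξ θ hθK hnear
      rw [Real.dist_eq] at this
      linarith [(abs_lt.mp this).1]
    have hinner : ⟪θ, ξ⟫ ≤ 1 := by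
      simpa [hθ] using (real_inner_le_norm θ ξ).trans (by rw [hθ, one_mul]; exact hξ1)
    nlinarith
  · have hε : 0 < ε := by simpa using hfδ θ hθK θ hθK (by simpa using hδ)
    have hinner := inner_le_one_sub_sq_div_two hθ hξ1 hδ.le (by rwa [← dist_eq_norm])
    have hosc : f θ - f ξ ≤ 2 * M := by
      linarith [(abs_le.mp (hM θ hθK)).2, (abs_le.mp (hM ξ hξ)).1]
    nlinarith

theorem tendsto_sSup_inner_sub_sub_norm_add [ProperSpace E] {f : E → ℝ}
    (hf : ContinuousOn f (closedBall (0 : E) 1)) :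
    Tendsto (fun x : E => sSup ((fun ξ => ⟪x, ξ⟫ - f ξ) '' closedBall 0 1) - ‖x‖
      + f (‖x‖⁻¹ • x)) (cocompact E) (𝓝 0) := by
  rw [Metric.tendsto_nhds]
  intro ε hε
  have hK : IsCompact (closedBall (0 : E) 1) := isCompact_closedBall _ _
  obtain ⟨δ, hδ, hfδ⟩ := Metric.uniformContinuousOn_iff.mp
    (hK.uniformContinuousOn_of_continuous hf) (ε / 2) (by positivity)
  obtain ⟨M, hM⟩ := hK.exists_bound_of_continuousOn hf
  filter_upwards [tendsto_norm_cocompact_atTop.eventually_ge_atTop (max 1 (4 * M / δ ^ 2))]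
    with x hx
  set r := ‖x‖
  set θ := r⁻¹ • x
  have hr0 : 0 < r := one_pos.trans_le ((le_max_left _ _).trans hx)
  have hθ : ‖θ‖ = 1 := by simp [θ, norm_smul, hr0.ne', r]
  have hxθ : x = r • θ := by simp [θ, smul_smul, hr0.ne']
  have hr : 4 * M ≤ r * δ ^ 2 :=
    (div_le_iff₀ (by positivity)).mp ((le_max_right _ _).trans hx)
  have hupper : ∀ ξ ∈ closedBall (0 : E) 1, ⟪x, ξ⟫ - f ξ ≤ r - f θ + ε / 2 := by
    intro ξ hξ
    rw [hxθ, real_inner_smul_left]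
    exact mul_inner_sub_le hfδ (fun η hη => by simpa using hM η hη) hδ hr hθ hξ
  have hattained : r - f θ ∈ (fun ξ => ⟪x, ξ⟫ - f ξ) '' closedBall 0 1 :=
    ⟨θ, by simp [hθ], by
      simp only [hxθ, real_inner_smul_left, real_inner_self_eq_norm_sq, hθ]; ring⟩
  have hlow := le_csSup ⟨_, forall_mem_image.mpr hupper⟩ hattained
  have hupp := csSup_le ⟨_, hattained⟩ (forall_mem_image.mpr hupper)
  rw [Real.dist_eq, sub_zero, abs_lt]
  constructor <;> linarith

end LegendreAsymptotics

theorem stmt3_general (n : ℕ)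
    (φ : Esp n → ℝ)
    (ustar : Esp n → ℝ)
    (hcont : ContinuousOn ustar (closedBall (0 : Esp n) 1))
    (hbdry : ∀ ξ : Esp n, ‖ξ‖ = 1 → ustar ξ = -φ ξ)
    (u : Esp n → ℝ)
    (hu : ∀ x : Esp n,
      u x = sSup ((fun ξ : Esp n => (inner ℝ x ξ : ℝ) - ustar ξ) '' closedBall (0 : Esp n) 1)) :
    Tendsto (fun x : Esp n => u x - ‖x‖ - φ (‖x‖⁻¹ • x)) (cocompact (Esp n)) (nhds 0) := by
  refine (tendsto_sSup_inner_sub_sub_norm_add hcont).congr' ?_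
  filter_upwards [tendsto_norm_cocompact_atTop.eventually_ne_atTop 0] with x hx
  have hθ : ‖‖x‖⁻¹ • x‖ = 1 := by simp [norm_smul, hx]
  rw [hu, hbdry _ hθ, ← sub_eq_add_neg]

/-- asymptotics of the Legendre transform of a strictly convex
function on the closed unit ball with boundary values -φ. -/
theorem stmt3 (n : ℕ) (hn : 1 ≤ n)
    (φ : Esp n → ℝ) (hφ : ContinuousOn φ (sphere (0 : Esp n) 1))
    (ustar : Esp n → ℝ)
    (hcont : ContinuousOn ustar (closedBall (0 : Esp n) 1))
    (hconv : StrictConvexOn ℝ (closedBall (0 : Esp n) 1) ustar)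
    (hbdry : ∀ ξ : Esp n, ‖ξ‖ = 1 → ustar ξ = -φ ξ)
    (u : Esp n → ℝ)
    (hu : ∀ x : Esp n,
      u x = sSup ((fun ξ : Esp n => (inner ℝ x ξ : ℝ) - ustar ξ) '' closedBall (0 : Esp n) 1)) :
    Tendsto (fun x : Esp n => u x - ‖x‖ - φ (‖x‖⁻¹ • x)) (cocompact (Esp n)) (nhds 0) :=
  stmt3_general n φ ustar hcont hbdry u hu

end
end

section
/- Let Ω ⊂ ℝⁿ be a bounded open set and let u, ū, Ψ : Ω → ℝ be C¹ functions that are strictly spacelike (|Du|, |Dū|, |DΨ| < 1 on Ω). Assume u is strictly convex, u < ū in Ω, and Ψ > ū near ∂Ω. Then for every x in the set {u > Ψ} = {y ∈ Ω : u(y) > Ψ(y)}, one has 1/√(1−|Du(x)|²) ≤ (1/(u(x)−Ψ(x))) · sup_{{u>Ψ}} (ū−Ψ)/√(1−|DΨ|²). -/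
open Filter Real Set Metric Bornology

noncomputable section

/-! The tangent plane `L` of the convex function `u` at `x` lies below `u < ū`, hence below `Ψ`
near `∂Ω`. Maximising `L - Ψ` over a compact set produces a point `z` with `u z - Ψ z ≥ u x - Ψ x`
where `L - Ψ` has a local maximum, so `DΨ(z) = Du(x)`; the quotient in the supremum is therefore
at least `(u x - Ψ x) / √(1 - |Du(x)|²)` at `z`. -/

open AffineMap

theorem ConvexOn.add_fderiv_sub_le {E : Type*} [NormedAddCommGroup E] [NormedSpace ℝ E]
    {s : Set E} {f : E → ℝ} {f' : E →L[ℝ] ℝ} {x y : E} (hf : ConvexOn ℝ s f)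
    (hx : x ∈ s) (hy : y ∈ s) (hf' : HasFDerivAt f f' x) :
    f x + f' (y - x) ≤ f y := by
  have hline : HasDerivAt (f ∘ lineMap (k := ℝ) x y) (f' (y - x)) 0 := by
    have hx0 : lineMap x y (0 : ℝ) = x := lineMap_apply_zero x y
    exact (hx0 ▸ hf').comp_hasDerivAt 0 hasDerivAt_lineMap
  have hslope := (hf.comp_affineMap (lineMap x y)).le_slope_of_hasDerivAt
    (by simpa using hx) (by simpa using hy) one_pos hline
  simp only [slope_def_field, Function.comp_apply, lineMap_apply_zero, lineMap_apply_one,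
    sub_zero, div_one] at hslope
  linarith

theorem IsCompact.exists_isLocalMax_of_neg_outside {X : Type*} [TopologicalSpace X]
    {Ω K : Set X} {g : X → ℝ} (hK : IsCompact K) (hΩ : IsOpen Ω) (hKΩ : K ⊆ Ω)
    (hg : ContinuousOn g K) (hneg : ∀ x ∈ Ω \ K, g x < 0) {x₀ : X} (hx₀ : x₀ ∈ Ω)
    (hgx₀ : 0 ≤ g x₀) : ∃ z ∈ K, IsLocalMax g z ∧ g x₀ ≤ g z := by
  have hx₀K : x₀ ∈ K := by
    by_contra h
    exact (hneg x₀ ⟨hx₀, h⟩).not_ge hgx₀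
  obtain ⟨z, hzK, hzmax⟩ := hK.exists_isMaxOn ⟨x₀, hx₀K⟩ hg
  refine ⟨z, hzK, ?_, hzmax hx₀K⟩
  filter_upwards [hΩ.mem_nhds (hKΩ hzK)] with y hy
  by_cases hyK : y ∈ K
  · exact hzmax hyK
  · exact (hneg y ⟨hy, hyK⟩).le.trans (hgx₀.trans (hzmax hx₀K))

theorem ConvexOn.exists_fderiv_eq_of_lt_outside {E : Type*} [NormedAddCommGroup E]
    [NormedSpace ℝ E] {Ω K : Set E} {u Ψ : E → ℝ} {x : E} (hu : ConvexOn ℝ Ω u)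
    (hK : IsCompact K) (hΩ : IsOpen Ω) (hKΩ : K ⊆ Ω) (hΨ : DifferentiableOn ℝ Ψ Ω)
    (hlt : ∀ y ∈ Ω \ K, u y < Ψ y) (hx : x ∈ Ω) (hux : DifferentiableAt ℝ u x)
    (hΨx : Ψ x ≤ u x) :
    ∃ z ∈ K, fderiv ℝ Ψ z = fderiv ℝ u x ∧ u x - Ψ x ≤ u z - Ψ z := by
  set F := fderiv ℝ u x
  set L := fun y => u x + F (y - x)
  have hLu : ∀ y ∈ Ω, L y ≤ u y := fun y hy => hu.add_fderiv_sub_le hx hy hux.hasFDerivAt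
  have hL : ∀ y, HasFDerivAt L F y := fun y =>
    (F.hasFDerivAt.comp y ((hasFDerivAt_id y).sub_const x)).const_add (u x)
  have hLx : L x = u x := by simp [L]
  obtain ⟨z, hzK, hzmax, hz⟩ := hK.exists_isLocalMax_of_neg_outside (g := fun y => L y - Ψ y)
    hΩ hKΩ ((continuous_iff_continuousAt.2 fun y => (hL y).continuousAt).continuousOn.sub
      hΨ.continuousOn |>.mono hKΩ)
    (fun y hy => by linarith [hLu y hy.1, hlt y hy]) hx (by rw [hLx]; linarith)
  have hΨz := (hΨ.differentiableAt (hΩ.mem_nhds (hKΩ hzK))).hasFDerivAt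
  refine ⟨z, hzK, (sub_eq_zero.1 (hzmax.hasFDerivAt_eq_zero ((hL z).sub hΨz))).symm, ?_⟩
  linarith [hLu z (hKΩ hzK)]

theorem continuousOn_egradSq {n : ℕ} {Ω : Set (Esp n)} {u : Esp n → ℝ}
    (hu : ContDiffOn ℝ 1 u Ω) (hΩ : IsOpen Ω) : ContinuousOn (EgradSq n u) Ω := by
  have hDu := hu.continuousOn_fderiv_of_isOpen hΩ le_rfl
  exact continuousOn_finsetSum _ fun i _ => (hDu.clm_apply continuousOn_const).pow 2

theorem stmt7_general (n : ℕ)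
    (Ω : Set (Esp n)) (hΩo : IsOpen Ω)
    (u ub Ψ : Esp n → ℝ)
    (huC1 : ContDiffOn ℝ 1 u Ω) (hubC1 : ContDiffOn ℝ 1 ub Ω) (hΨC1 : ContDiffOn ℝ 1 Ψ Ω)
    (hΨsp : ∀ x ∈ Ω, EgradSq n Ψ x < 1)
    (huconv : StrictConvexOn ℝ Ω u)
    (hult : ∀ x ∈ Ω, u x < ub x)
    (hnear : ∃ K : Set (Esp n), IsCompact K ∧ K ⊆ Ω ∧ ∀ x ∈ Ω \ K, ub x < Ψ x) :
    ∀ x ∈ Ω, Ψ x < u x →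
      1 / Real.sqrt (1 - EgradSq n u x) ≤
        (1 / (u x - Ψ x)) *
          sSup ((fun y => (ub y - Ψ y) / Real.sqrt (1 - EgradSq n Ψ y)) ''
            {y ∈ Ω | Ψ y < u y}) := by
  obtain ⟨K, hK, hKΩ, hnear⟩ := hnear
  intro x hx hΨx
  set f := fun y => (ub y - Ψ y) / Real.sqrt (1 - EgradSq n Ψ y)
  obtain ⟨z, hzK, hDΨz, hz⟩ := huconv.convexOn.exists_fderiv_eq_of_lt_outside hK hΩo hKΩ
    (hΨC1.differentiableOn one_ne_zero) (fun y hy => (hult y hy.1).trans (hnear y hy)) hx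
    ((huC1.differentiableOn one_ne_zero).differentiableAt (hΩo.mem_nhds hx)) hΨx.le
  have hzΩ := hKΩ hzK
  have hsubK : {y ∈ Ω | Ψ y < u y} ⊆ K := fun y ⟨hy, hlt⟩ => by
    by_contra hyK
    linarith [hnear y ⟨hy, hyK⟩, hult y hy]
  have hf : ContinuousOn f Ω :=
    (hubC1.continuousOn.sub hΨC1.continuousOn).div
      (continuousOn_const.sub (continuousOn_egradSq hΨC1 hΩo)).sqrt
      fun y hy => (Real.sqrt_pos.2 (sub_pos.2 (hΨsp y hy))).ne'
  have hsup : f z ≤ sSup (f '' {y ∈ Ω | Ψ y < u y}) :=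
    le_csSup ((hK.image_of_continuousOn (hf.mono hKΩ)).bddAbove.mono (image_mono hsubK))
      ⟨z, ⟨hzΩ, by linarith⟩, rfl⟩
  have hfz : f z = (ub z - Ψ z) / Real.sqrt (1 - EgradSq n u x) := by
    simp only [f, EgradSq, Egrad, hDΨz]
  have hc : 0 < u x - Ψ x := sub_pos.2 hΨx
  calc 1 / Real.sqrt (1 - EgradSq n u x)
      = 1 / (u x - Ψ x) * ((u x - Ψ x) / Real.sqrt (1 - EgradSq n u x)) := by field_simp
    _ ≤ 1 / (u x - Ψ x) * sSup (f '' {y ∈ Ω | Ψ y < u y}) := by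
        gcongr
        refine le_trans (div_le_div_of_nonneg_right ?_ (Real.sqrt_nonneg _)) (hfz ▸ hsup)
        linarith [hult z hzΩ]

/-- local gradient estimate of Bayard–Schnürer for strictly convex
spacelike graphs. -/
theorem stmt7 (n : ℕ) (hn : 1 ≤ n)
    (Ω : Set (Esp n)) (hΩo : IsOpen Ω) (hΩb : IsBounded Ω)
    (u ub Ψ : Esp n → ℝ)
    (huC1 : ContDiffOn ℝ 1 u Ω) (hubC1 : ContDiffOn ℝ 1 ub Ω) (hΨC1 : ContDiffOn ℝ 1 Ψ Ω)
    (husp : ∀ x ∈ Ω, EgradSq n u x < 1)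
    (hubsp : ∀ x ∈ Ω, EgradSq n ub x < 1)
    (hΨsp : ∀ x ∈ Ω, EgradSq n Ψ x < 1)
    (huconv : StrictConvexOn ℝ Ω u)
    (hult : ∀ x ∈ Ω, u x < ub x)
    (hnear : ∃ K : Set (Esp n), IsCompact K ∧ K ⊆ Ω ∧ ∀ x ∈ Ω \ K, ub x < Ψ x) :
    ∀ x ∈ Ω, Ψ x < u x →
      1 / Real.sqrt (1 - EgradSq n u x) ≤
        (1 / (u x - Ψ x)) *
          sSup ((fun y => (ub y - Ψ y) / Real.sqrt (1 - EgradSq n Ψ y)) ''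
            {y ∈ Ω | Ψ y < u y}) :=
  stmt7_general n Ω hΩo u ub Ψ huC1 hubC1 hΨC1 hΨsp huconv hult hnear

end
end

section
/- Let k ≥ 1 be an integer and let z : (0,∞) → ℝ be a positive differentiable solution of the equation z′(r) = −A(r) z(r)^k + B(r), where A, B : (0,∞) → ℝ are continuous functions such that lim_{r→∞} A(r) = A₀ > 0 and lim_{r→∞} B(r) = B₀ > 0. Then lim_{r→∞} z(r) = (B₀/A₀)^{1/k}. -/
open Filter Set

/-!
Let `L = (B₀/A₀)^{1/k}` be the positive root of `A₀ x^k = B₀`. For `0 ≤ m < L`, wherever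
`z ≤ m` the right-hand side `-A z^k + B` is eventually at least `(B₀ - A₀ m^k)/2 > 0`. Hence
`z` cannot stay below `m` (it would grow linearly), and once it has reached `m` it can never
cross back below it. Symmetrically `z` is eventually below every `M > L`, so `z` is trapped in any
neighbourhood of `L`.
-/

section Barrier

variable {z g : ℝ → ℝ} {m c : ℝ}

lemma exists_ge_of_deriv_ge_below {R : ℝ} (hc : 0 < c) (hd : ∀ r ≥ R, HasDerivAt z (g r) r)
    (hgrow : ∀ r ≥ R, z r ≤ m → c ≤ g r) : ∃ r ≥ R, m ≤ z r := by
  by_contra! hlt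
  have hlin : ∀ r ≥ R, z R + c * (r - R) ≤ z r := by
    intro r hr
    have := (convex_Ici R).mul_sub_le_image_sub_of_le_deriv
      (fun x hx => (hd x hx).continuousAt.continuousWithinAt)
      (fun x hx => (hd x (interior_subset hx)).differentiableAt.differentiableWithinAt)
      (fun x hx => (hd x (interior_subset hx)).deriv ▸
        hgrow x (interior_subset hx) (hlt x (interior_subset hx)).le)
      R self_mem_Ici r hr hr
    linarith
  have hlinTendsto : Tendsto (fun r => z R + c * (r - R)) atTop atTop :=
    tendsto_atTop_add_const_left _ _
      ((tendsto_atTop_add_const_right _ _ tendsto_id).const_mul_atTop hc)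
  have hzTendsto : Tendsto z atTop atTop :=
    tendsto_atTop_mono' _ ((eventually_ge_atTop R).mono hlin) hlinTendsto
  obtain ⟨r, hrR, hr⟩ := ((eventually_ge_atTop R).and (hzTendsto.eventually_ge_atTop m)).exists
  exact (hlt r hrR).not_ge hr

lemma eventually_ge_of_deriv_ge_below (hc : 0 < c) (hd : ∀ᶠ r in atTop, HasDerivAt z (g r) r)
    (hgrow : ∀ᶠ r in atTop, z r ≤ m → c ≤ g r) : ∀ᶠ r in atTop, m ≤ z r := by
  obtain ⟨R, hR⟩ := eventually_atTop.1 (hd.and hgrow)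
  obtain ⟨r₀, hr₀R, hr₀⟩ :=
    exists_ge_of_deriv_ge_below hc (fun r hr => (hR r hr).1) (fun r hr => (hR r hr).2)
  filter_upwards [eventually_ge_atTop r₀] with r hr
  have hd' : ∀ x ≥ r₀, HasDerivAt (fun x => -z x) (-g x) x :=
    fun x hx => (hR x (hr₀R.trans hx)).1.neg
  -- `-z` cannot cross the level `-m` upwards, since `z = m` forces `z' ≥ c > 0`.
  have := image_le_of_deriv_right_lt_deriv_boundary' (f := fun x => -z x) (B := fun _ => -m)
    (B' := fun _ => 0) (fun x hx => (hd' x hx.1).continuousAt.continuousWithinAt)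
    (fun x hx => (hd' x hx.1).hasDerivWithinAt) (neg_le_neg hr₀) continuousOn_const
    (fun _ _ => hasDerivWithinAt_const _ _ _)
    (fun x hx hzx => by
      have := (hR x (hr₀R.trans hx.1)).2 (neg_inj.1 hzx).le
      linarith)
    ⟨hr, le_rfl⟩
  exact neg_le_neg_iff.1 this

lemma eventually_le_of_deriv_le_above (hc : 0 < c) (hd : ∀ᶠ r in atTop, HasDerivAt z (g r) r)
    (hgrow : ∀ᶠ r in atTop, m ≤ z r → g r ≤ -c) : ∀ᶠ r in atTop, z r ≤ m := by
  have := eventually_ge_of_deriv_ge_below (z := fun r => -z r) (g := fun r => -g r) (m := -m) hc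
    (hd.mono fun _ h => h.neg)
    (hgrow.mono fun _ h hz => le_neg_of_le_neg (h (neg_le_neg_iff.1 hz)))
  exact this.mono fun _ h => neg_le_neg_iff.1 h

end Barrier

section PowerODE

variable {k : ℕ} {z A B : ℝ → ℝ} {A₀ B₀ : ℝ}

lemma eventually_ge_of_mul_pow_lt {m : ℝ}
    (hode : ∀ᶠ r in atTop, HasDerivAt z (-A r * z r ^ k + B r) r)
    (hz : ∀ᶠ r in atTop, 0 ≤ z r) (hA₀ : 0 < A₀) (hAlim : Tendsto A atTop (nhds A₀))
    (hBlim : Tendsto B atTop (nhds B₀)) (hm : A₀ * m ^ k < B₀) :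
    ∀ᶠ r in atTop, m ≤ z r := by
  have hlim : Tendsto (fun r => -A r * m ^ k + B r) atTop (nhds (-A₀ * m ^ k + B₀)) :=
    (hAlim.neg.mul_const _).add hBlim
  have hgap := hlim.eventually_const_lt
    (show (B₀ - A₀ * m ^ k) / 2 < -A₀ * m ^ k + B₀ by linarith [neg_mul A₀ (m ^ k)])
  refine eventually_ge_of_deriv_ge_below (c := (B₀ - A₀ * m ^ k) / 2) (by linarith) hode ?_
  filter_upwards [hgap, hz, hAlim.eventually_const_lt hA₀] with r hgap hz hA hzm
  have : A r * z r ^ k ≤ A r * m ^ k := by gcongr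
  linarith

lemma eventually_le_of_lt_mul_pow {M : ℝ}
    (hode : ∀ᶠ r in atTop, HasDerivAt z (-A r * z r ^ k + B r) r)
    (hA₀ : 0 < A₀) (hAlim : Tendsto A atTop (nhds A₀)) (hBlim : Tendsto B atTop (nhds B₀))
    (hM : 0 ≤ M) (hM' : B₀ < A₀ * M ^ k) : ∀ᶠ r in atTop, z r ≤ M := by
  have hlim : Tendsto (fun r => -A r * M ^ k + B r) atTop (nhds (-A₀ * M ^ k + B₀)) :=
    (hAlim.neg.mul_const _).add hBlim
  have hgap := hlim.eventually_lt_const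
    (show -A₀ * M ^ k + B₀ < -((A₀ * M ^ k - B₀) / 2) by linarith [neg_mul A₀ (M ^ k)])
  refine eventually_le_of_deriv_le_above (c := (A₀ * M ^ k - B₀) / 2) (by linarith) hode ?_
  filter_upwards [hgap, hAlim.eventually_const_lt hA₀] with r hgap hA hzM
  have : A r * M ^ k ≤ A r * z r ^ k := by gcongr
  linarith

end PowerODE

theorem stmt14_general (k : ℕ) (hk : 1 ≤ k)
    (z A B : ℝ → ℝ)
    (hzpos : ∀ r ∈ Ioi (0 : ℝ), 0 < z r)
    (hode : ∀ r ∈ Ioi (0 : ℝ), HasDerivAt z (-A r * z r ^ k + B r) r)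
    (A₀ B₀ : ℝ) (hA₀ : 0 < A₀) (hB₀ : 0 < B₀)
    (hAlim : Tendsto A atTop (nhds A₀)) (hBlim : Tendsto B atTop (nhds B₀)) :
    Tendsto z atTop (nhds ((B₀ / A₀) ^ ((1 : ℝ) / (k : ℝ)))) := by
  have hode' := (eventually_gt_atTop 0).mono hode
  set L := (B₀ / A₀) ^ ((1 : ℝ) / (k : ℝ))
  have hL : 0 < L := by positivity
  have hLk : A₀ * L ^ k = B₀ := by
    simp only [L, one_div]
    rw [Real.rpow_inv_natCast_pow (by positivity) (by omega)]
    field_simp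
  rw [tendsto_order]
  refine ⟨fun a ha => ?_, fun b hb => ?_⟩
  · obtain ⟨m, ham, hmL⟩ := exists_between (max_lt ha hL)
    have hm0 : 0 ≤ m := (le_max_right a 0).trans ham.le
    have hm : A₀ * m ^ k < B₀ :=
      hLk ▸ mul_lt_mul_of_pos_left (pow_lt_pow_left₀ hmL hm0 (by omega)) hA₀
    have hz : ∀ᶠ r in atTop, 0 ≤ z r :=
      (eventually_gt_atTop 0).mono fun r hr => (hzpos r hr).le
    exact (eventually_ge_of_mul_pow_lt hode' hz hA₀ hAlim hBlim hm).mono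
      fun r h => (max_lt_iff.1 ham).1.trans_le h
  · obtain ⟨M, hLM, hMb⟩ := exists_between hb
    have hM : B₀ < A₀ * M ^ k :=
      hLk ▸ mul_lt_mul_of_pos_left (pow_lt_pow_left₀ hLM hL.le (by omega)) hA₀
    exact (eventually_le_of_lt_mul_pow hode' hA₀ hAlim hBlim (hL.le.trans hLM.le) hM).mono
      fun r h => h.trans_lt hMb

/-- if z' = -A(r)z^k + B(r) with z > 0 and A → A₀ > 0, B → B₀ > 0,
then z(r) → (B₀/A₀)^{1/k} as r → ∞. -/
theorem stmt14 (k : ℕ) (hk : 1 ≤ k)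
    (z A B : ℝ → ℝ)
    (hzpos : ∀ r ∈ Ioi (0 : ℝ), 0 < z r)
    (hA : ContinuousOn A (Ioi 0)) (hB : ContinuousOn B (Ioi 0))
    (hode : ∀ r ∈ Ioi (0 : ℝ), HasDerivAt z (-A r * z r ^ k + B r) r)
    (A₀ B₀ : ℝ) (hA₀ : 0 < A₀) (hB₀ : 0 < B₀)
    (hAlim : Tendsto A atTop (nhds A₀)) (hBlim : Tendsto B atTop (nhds B₀)) :
    Tendsto z atTop (nhds ((B₀ / A₀) ^ ((1 : ℝ) / (k : ℝ)))) :=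
  stmt14_general k hk z A B hzpos hode A₀ B₀ hA₀ hB₀ hAlim hBlim
end

section
/- Let k ≥ 1 be an integer, let A₀ < 0 and B₀ > 0 be constants, and let z : (0,∞) → ℝ be a positive differentiable solution of the autonomous equation z′(r) = A₀ z(r)^k + B₀ for all r > 0. Then lim_{r→∞} z(r) = (−B₀/A₀)^{1/k}. -/
/-!
The square distance `V = (z - L)²` to the unique positive equilibrium `L` of
`x ↦ A₀ xᵏ + B₀` is a Lyapunov function: `V' = 2 (z - L) (A₀ zᵏ + B₀) ≤ 0`, because the
right-hand side is decreasing in `x ≥ 0` and vanishes at `L`. If `V` stayed above some `ε > 0`,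
the trajectory would remain in a compact set avoiding `L`, on which `V'` is bounded away from
zero, so `V` would eventually become negative.
-/

open Filter Set Metric Topology

lemma antitoneOn_Ioi_of_hasDerivAt_nonpos {g g' : ℝ → ℝ} {a : ℝ}
    (hg : ∀ r ∈ Ioi a, HasDerivAt g (g' r) r) (hg' : ∀ r ∈ Ioi a, g' r ≤ 0) :
    AntitoneOn g (Ioi a) :=
  antitoneOn_of_hasDerivWithinAt_nonpos (convex_Ioi a)
    (fun r hr ↦ (hg r hr).continuousAt.continuousWithinAt)
    (by rw [interior_Ioi]; exact fun r hr ↦ (hg r hr).hasDerivWithinAt)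
    (by rw [interior_Ioi]; exact hg')

lemma exists_lt_of_hasDerivAt_le_neg {g g' : ℝ → ℝ} {a δ : ℝ} (hδ : 0 < δ)
    (hg : ∀ r ∈ Ioi a, HasDerivAt g (g' r) r) (hg' : ∀ r ∈ Ioi a, g' r ≤ -δ) (c : ℝ) :
    ∃ r ∈ Ioi a, g r < c := by
  have hanti : AntitoneOn (fun r ↦ g r + δ * r) (Ioi a) :=
    antitoneOn_Ioi_of_hasDerivAt_nonpos
      (fun r hr ↦ (hg r hr).add ((hasDerivAt_id r).const_mul δ |>.congr_deriv (mul_one δ)))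
      fun r hr ↦ by linarith [hg' r hr]
  set b := a + 1
  have hb : b ∈ Ioi a := by simp [b]
  set r := b + (|g b - c| + 1) / δ
  have hbr : b < r := lt_add_of_pos_right b (by positivity)
  have hdecr : g r + δ * r ≤ g b + δ * b := hanti hb (lt_trans hb hbr) hbr.le
  have hδr : δ * (r - b) = |g b - c| + 1 := by simp only [r]; field_simp; ring
  refine ⟨r, lt_trans hb hbr, ?_⟩
  linarith [le_abs_self (g b - c)]

lemma sub_mul_pow_sub_pow_pos {x y : ℝ} {k : ℕ} (hk : k ≠ 0) (hx : 0 ≤ x) (hy : 0 ≤ y)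
    (hxy : x ≠ y) : 0 < (x - y) * (x ^ k - y ^ k) := by
  rcases hxy.lt_or_gt with h | h
  · exact mul_pos_of_neg_of_neg (sub_neg.2 h) (sub_neg.2 (pow_lt_pow_left₀ h hx hk))
  · exact mul_pos (sub_pos.2 h) (sub_pos.2 (pow_lt_pow_left₀ h hy hk))

section Lyapunov

variable {f z : ℝ → ℝ} {S : Set ℝ} {a L : ℝ}

lemma hasDerivAt_sq_sub (hz : ∀ r ∈ Ioi a, HasDerivAt z (f (z r)) r) :
    ∀ r ∈ Ioi a, HasDerivAt (fun r ↦ (z r - L) ^ 2) (2 * ((z r - L) * f (z r))) r :=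
  fun r hr ↦ (((hz r hr).sub_const L).fun_pow 2).congr_deriv (by push_cast; ring)

lemma antitoneOn_sq_sub (hsign : ∀ x ∈ S, x ≠ L → (x - L) * f x < 0)
    (hzS : ∀ r ∈ Ioi a, z r ∈ S) (hz : ∀ r ∈ Ioi a, HasDerivAt z (f (z r)) r) :
    AntitoneOn (fun r ↦ (z r - L) ^ 2) (Ioi a) := by
  refine antitoneOn_Ioi_of_hasDerivAt_nonpos (hasDerivAt_sq_sub hz) fun r hr ↦ ?_
  rcases eq_or_ne (z r) L with h | h
  · simp [h]
  · linarith [hsign _ (hzS r hr) h]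

lemma exists_sq_sub_lt (hS : IsClosed S) (hf : ContinuousOn f S)
    (hsign : ∀ x ∈ S, x ≠ L → (x - L) * f x < 0)
    (hzS : ∀ r ∈ Ioi a, z r ∈ S) (hz : ∀ r ∈ Ioi a, HasDerivAt z (f (z r)) r)
    {ε : ℝ} (hε : 0 < ε) : ∃ r ∈ Ioi a, (z r - L) ^ 2 < ε := by
  by_contra! hge
  set b := a + 1
  have hb : b ∈ Ioi a := by simp [b]
  have hab : Ioi b ⊆ Ioi a := Ioi_subset_Ioi hb.le
  set K := S ∩ closedBall L |z b - L| ∩ {x | ε ≤ (x - L) ^ 2}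
  have hK : IsCompact K :=
    ((isCompact_closedBall L _).inter_left hS).inter_right
      (isClosed_le continuous_const (by fun_prop))
  have hzK : ∀ r ∈ Ioi b, z r ∈ K := by
    intro r hr
    have hV := antitoneOn_sq_sub hsign hzS hz hb (hab hr) hr.le
    refine ⟨⟨hzS r (hab hr), ?_⟩, hge r (hab hr)⟩
    rw [mem_closedBall, Real.dist_eq]
    exact sq_le_sq.1 hV
  obtain ⟨x₀, hx₀K, hmax⟩ := hK.exists_isMaxOn (f := fun x ↦ (x - L) * f x)
    ⟨_, hzK (b + 1) (by simp)⟩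
    ((continuousOn_id.sub continuousOn_const).mul (hf.mono fun x hx ↦ hx.1.1))
  have hx₀ : (x₀ - L) * f x₀ < 0 := by
    refine hsign x₀ hx₀K.1.1 fun h ↦ ?_
    have := hx₀K.2
    simp only [h, sub_self, mem_ofPred_eq] at this
    linarith
  -- on `K` the derivative of `(z - L)²` is at most `2 (x₀ - L) f x₀ < 0`
  obtain ⟨r, hr, hneg⟩ :=
    exists_lt_of_hasDerivAt_le_neg (by linarith : 0 < -(2 * ((x₀ - L) * f x₀)))
    (fun r hr ↦ hasDerivAt_sq_sub (L := L) hz r (hab hr))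
    (fun r hr ↦ by have := hmax (hzK r hr); simp only [mem_ofPred_eq] at this; linarith) 0
  exact (sq_nonneg _).not_gt hneg

theorem tendsto_of_hasDerivAt_of_sub_mul_neg (hS : IsClosed S) (hf : ContinuousOn f S)
    (hsign : ∀ x ∈ S, x ≠ L → (x - L) * f x < 0)
    (hzS : ∀ r ∈ Ioi a, z r ∈ S) (hz : ∀ r ∈ Ioi a, HasDerivAt z (f (z r)) r) :
    Tendsto z atTop (𝓝 L) := by
  rw [Metric.tendsto_atTop]
  intro ε hε
  obtain ⟨r₀, hr₀, hlt⟩ := exists_sq_sub_lt hS hf hsign hzS hz (pow_pos hε 2)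
  refine ⟨r₀, fun r hr ↦ ?_⟩
  rw [Real.dist_eq]
  have hV := antitoneOn_sq_sub hsign hzS hz hr₀ (lt_of_lt_of_le hr₀ hr) hr
  exact abs_lt_of_sq_lt_sq (hV.trans_lt hlt) hε.le

end Lyapunov

/-- if z' = A₀ z^k + B₀ with z > 0, A₀ < 0 and B₀ > 0 constants,
then z(r) → (-B₀/A₀)^{1/k} as r → ∞. -/
theorem stmt15 (k : ℕ) (hk : 1 ≤ k)
    (A₀ B₀ : ℝ) (hA₀ : A₀ < 0) (hB₀ : 0 < B₀)
    (z : ℝ → ℝ)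
    (hzpos : ∀ r ∈ Ioi (0 : ℝ), 0 < z r)
    (hode : ∀ r ∈ Ioi (0 : ℝ), HasDerivAt z (A₀ * z r ^ k + B₀) r) :
    Tendsto z atTop (nhds ((-B₀ / A₀) ^ ((1 : ℝ) / (k : ℝ)))) := by
  have hk0 : k ≠ 0 := by omega
  have hquo : 0 ≤ -B₀ / A₀ := div_nonneg_of_nonpos (by linarith) hA₀.le
  have hLk : A₀ * ((-B₀ / A₀) ^ ((1 : ℝ) / k)) ^ k + B₀ = 0 := by
    rw [one_div, Real.rpow_inv_natCast_pow hquo hk0, mul_div_cancel₀ _ hA₀.ne]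
    ring
  have hL : 0 ≤ (-B₀ / A₀) ^ ((1 : ℝ) / k) := Real.rpow_nonneg hquo _
  generalize (-B₀ / A₀) ^ ((1 : ℝ) / k) = L at hL hLk ⊢
  refine tendsto_of_hasDerivAt_of_sub_mul_neg (S := Ici 0) (f := fun x ↦ A₀ * x ^ k + B₀)
    isClosed_Ici (by fun_prop) (fun x hx hxL ↦ ?_) (fun r hr ↦ (hzpos r hr).le) hode
  calc (x - L) * (A₀ * x ^ k + B₀) = A₀ * ((x - L) * (x ^ k - L ^ k)) := by
        linear_combination (x - L) * hLk
    _ < 0 := mul_neg_of_neg_of_pos hA₀ (sub_mul_pow_sub_pow_pos hk0 hx hL hxL)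
end
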